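/- arXiv:1809.07762 — 8 statements merged into one kernel-verified Lean document; each statement's English description precedes it below -/
import Mathlib

section
/- Let E be a real normed vector space, f : E → ℝ a differentiable function, and Z : E → E a boundary-gradient-like vector field for f (i.e. Df(p)(Z p) ≥ 0 for all p ∈ E, and Df(p)(Z p) > 0 whenever f(p) = 0). Define F : E × ℝ → ℝ by F(p,s) = s² + f(p). Then F is differentiable and for every (p,s) ∈ E × ℝ the Fréchet derivative of F at (p,s) applied to the vector (Z p, s) equals 2s² + Df(p)(Z p); this quantity is ≥ 0 for every (p,s), and it is strictly positive whenever F(p,s) = 0. In particular DF(p,s) ≠ 0 at every point of F⁻¹(0), i.e. 0 is a regular value of F, so the double {(p,s) ∈ E × ℝ : s² + f(p) = 0} is a regular level set, and the vector field (p,s) ↦ (Z p, s) is boundary-gradient-like for F. -/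
section SquarePlus

variable {𝕜 E : Type*} [NontriviallyNormedField 𝕜] [NormedAddCommGroup E] [NormedSpace 𝕜 E]
  {f : E → 𝕜} {f' : E →L[𝕜] 𝕜} {p : E} {s : 𝕜}

theorem HasFDerivAt.sq_snd_add_comp_fst (hf : HasFDerivAt f f' p) :
    HasFDerivAt (fun x : E × 𝕜 => x.2 ^ 2 + f x.1)
      ((2 * s) • ContinuousLinearMap.snd 𝕜 E 𝕜 + f'.comp (ContinuousLinearMap.fst 𝕜 E 𝕜))
      (p, s) := by
  have hsq : HasFDerivAt (fun x : E × 𝕜 => x.2 ^ 2)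
      ((2 * s) • ContinuousLinearMap.snd 𝕜 E 𝕜) (p, s) := by
    refine ((hasFDerivAt_snd (p := (p, s))).pow 2).congr_fderiv ?_
    ext <;> simp
  exact hsq.add (hf.comp (p, s) hasFDerivAt_fst)

theorem fderiv_sq_snd_add_comp_fst_apply (hf : DifferentiableAt 𝕜 f p) (v : E) (t : 𝕜) :
    fderiv 𝕜 (fun x : E × 𝕜 => x.2 ^ 2 + f x.1) (p, s) (v, t) = 2 * s * t + fderiv 𝕜 f p v := by
  rw [hf.hasFDerivAt.sq_snd_add_comp_fst.fderiv]
  simp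

end SquarePlus

theorem two_mul_sq_add_pos_of_sq_add_eq_zero {s a b : ℝ} (ha : 0 ≤ a) (hb : b = 0 → 0 < a)
    (h : s ^ 2 + b = 0) : 0 < 2 * s ^ 2 + a := by
  rcases eq_or_ne s 0 with rfl | hs
  · simpa using hb (by simpa using h)
  · have : 0 < s ^ 2 := by positivity
    linarith

/-- If `Z` is boundary-gradient-like for a differentiable `f : E → ℝ`, then
`F (p,s) = s^2 + f p` is differentiable, `DF(p,s)(Z p, s) = 2 s^2 + Df(p)(Z p)`, this quantity
is nonnegative everywhere and positive on `F⁻¹(0)`; in particular `DF ≠ 0` on `F⁻¹(0)`, i.e.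
`0` is a regular value of `F`, and `(p,s) ↦ (Z p, s)` is boundary-gradient-like for `F`. -/
theorem stmt_0 {E : Type*} [NormedAddCommGroup E] [NormedSpace ℝ E]
    (f : E → ℝ) (Z : E → E)
    (hf : Differentiable ℝ f)
    (hZnonneg : ∀ p : E, 0 ≤ fderiv ℝ f p (Z p))
    (hZpos : ∀ p : E, f p = 0 → 0 < fderiv ℝ f p (Z p)) :
    Differentiable ℝ (fun x : E × ℝ => x.2 ^ 2 + f x.1) ∧
    (∀ (p : E) (s : ℝ),
      fderiv ℝ (fun x : E × ℝ => x.2 ^ 2 + f x.1) (p, s) (Z p, s)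
        = 2 * s ^ 2 + fderiv ℝ f p (Z p)) ∧
    (∀ (p : E) (s : ℝ), 0 ≤ 2 * s ^ 2 + fderiv ℝ f p (Z p)) ∧
    (∀ (p : E) (s : ℝ), s ^ 2 + f p = 0 → 0 < 2 * s ^ 2 + fderiv ℝ f p (Z p)) ∧
    (∀ (p : E) (s : ℝ), s ^ 2 + f p = 0 →
      fderiv ℝ (fun x : E × ℝ => x.2 ^ 2 + f x.1) (p, s) ≠ 0) := by
  have hderiv : ∀ (p : E) (s : ℝ),
      fderiv ℝ (fun x : E × ℝ => x.2 ^ 2 + f x.1) (p, s) (Z p, s)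
        = 2 * s ^ 2 + fderiv ℝ f p (Z p) := fun p s => by
    rw [fderiv_sq_snd_add_comp_fst_apply (hf p), mul_assoc, ← sq]
  have hpos : ∀ (p : E) (s : ℝ), s ^ 2 + f p = 0 → 0 < 2 * s ^ 2 + fderiv ℝ f p (Z p) :=
    fun p _ => two_mul_sq_add_pos_of_sq_add_eq_zero (hZnonneg p) (hZpos p)
  refine ⟨fun x => (hf x.1).hasFDerivAt.sq_snd_add_comp_fst.differentiableAt, hderiv,
    fun p s => add_nonneg (by positivity) (hZnonneg p), hpos, fun p s h hzero => ?_⟩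
  exact (hpos p s h).ne (by rw [← hderiv, hzero, zero_apply])
end

section
/- Let M be a Hausdorff, σ-compact C^∞ manifold without boundary modeled on a finite-dimensional real vector space, and let f : M → ℝ be a C^∞ function such that df_p ≠ 0 for every p ∈ f⁻¹(0) (f is a regular equation of the level set f⁻¹(0)). Then there exists a smooth vector field Z on M which is boundary-gradient-like for f, i.e. df_p(Z p) ≥ 0 for every p ∈ M and df_p(Z p) > 0 for every p ∈ f⁻¹(0). -/
/-!
Near a zero `q` of `f`, a tangent vector `v` with `df_q v > 0`, extended to a local vector field
through a trivialization, keeps `df(Z) > 0` on a neighbourhood of `q`; off `f⁻¹(0)` the zero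
field will do. The admissible vectors at `x` (`df_x v ≥ 0`, and `> 0` when `f x = 0`) form a
convex set, so a smooth partition of unity glues these local fields into a global one.
-/

open Manifold Bundle Filter Topology Set
open scoped ContDiff

lemma convex_setOf_nonneg_and_pos {V : Type*} [AddCommGroup V] [Module ℝ V] (L : V →ₗ[ℝ] ℝ)
    (P : Prop) : Convex ℝ {v | 0 ≤ L v ∧ (P → 0 < L v)} := by
  by_cases hP : P
  · simpa [hP, ofPred_and] using
      (convex_halfSpace_ge L.isLinear 0).inter (convex_halfSpace_gt L.isLinear 0)
  · simpa [hP] using convex_halfSpace_ge L.isLinear 0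

section

variable {E : Type*} [NormedAddCommGroup E] [NormedSpace ℝ E]
  {H : Type*} [TopologicalSpace H] {I : ModelWithCorners ℝ E H}
  {M : Type*} [TopologicalSpace M] [ChartedSpace H M]

lemma ContMDiff.continuousAt_mfderiv_apply [IsManifold I 1 M] {n : WithTop ℕ∞} {f : M → ℝ}
    (hf : ContMDiff I 𝓘(ℝ) n f) (hn : 1 ≤ n) {Z : (x : M) → TangentSpace I x} {x₀ : M}
    (hZ : ContinuousAt (fun x ↦ TotalSpace.mk' E x (Z x)) x₀) :
    ContinuousAt (fun x ↦ (mfderiv I 𝓘(ℝ) f x (Z x) : ℝ)) x₀ := by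
  have hTf : Continuous (tangentMap I 𝓘(ℝ) f) :=
    (hf.contMDiff_tangentMap (m := 0) (by simpa using hn)).continuous
  have hfiber : Continuous (fun v : TangentBundle 𝓘(ℝ) ℝ ↦ (v.2 : ℝ)) :=
    continuous_snd.comp (tangentBundleModelSpaceHomeomorph 𝓘(ℝ, ℝ)).continuous
  exact hfiber.continuousAt.comp (hTf.continuousAt.comp hZ)

lemma exists_vectorField_mfderiv_pos_nhds [IsManifold I ∞ M] {f : M → ℝ}
    (hf : ContMDiff I 𝓘(ℝ) ∞ f) {q : M} (hq : mfderiv I 𝓘(ℝ) f q ≠ 0) :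
    ∃ U ∈ 𝓝 q, ∃ Z : (x : M) → TangentSpace I x,
      ContMDiffOn I I.tangent ∞ (fun x ↦ TotalSpace.mk' E x (Z x)) U ∧
      ∀ x ∈ U, (0 : ℝ) < (mfderiv I 𝓘(ℝ) f x (Z x) : ℝ) := by
  set L : TangentSpace I q →L[ℝ] ℝ := mfderiv I 𝓘(ℝ) f q
  obtain ⟨w, hw⟩ : ∃ w, L w ≠ 0 := by
    by_contra! h
    exact hq (ContinuousLinearMap.ext h)
  set v : TangentSpace I q := (L w)⁻¹ • w
  have hv : L v = 1 := by simp only [v, map_smul, smul_eq_mul, inv_mul_cancel₀ hw]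
  set Z := FiberBundle.extend E v
  obtain ⟨U, hU, hZ⟩ := FiberBundle.exists_contMDiffOn_extend (k := ∞) I E v
  have hpos : ∀ᶠ x in 𝓝 q, (0 : ℝ) < (mfderiv I 𝓘(ℝ) f x (Z x) : ℝ) := by
    refine (hf.continuousAt_mfderiv_apply (by simp)
      (FiberBundle.contMDiffAt_extend (k := ∞) I E v).continuousAt).eventually
      (lt_mem_nhds ?_)
    have hZq : Z q = v := FiberBundle.extend_apply_self E v
    change 0 < L (Z q)
    rw [hZq, hv]
    exact one_pos
  exact ⟨U ∩ {x | (0 : ℝ) < (mfderiv I 𝓘(ℝ) f x (Z x) : ℝ)}, inter_mem hU hpos, Z,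
    hZ.mono inter_subset_left, fun x hx ↦ hx.2⟩

lemma exists_nhds_vectorField_gradientLike [IsManifold I ∞ M] {f : M → ℝ}
    (hf : ContMDiff I 𝓘(ℝ) ∞ f) (hreg : ∀ p : M, f p = 0 → mfderiv I 𝓘(ℝ) f p ≠ 0) (x₀ : M) :
    ∃ U ∈ 𝓝 x₀, ∃ Z : (x : M) → TangentSpace I x,
      ContMDiffOn I I.tangent ∞ (fun x ↦ TotalSpace.mk' E x (Z x)) U ∧
      ∀ x ∈ U, (0 : ℝ) ≤ (mfderiv I 𝓘(ℝ) f x (Z x) : ℝ) ∧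
        (f x = 0 → (0 : ℝ) < (mfderiv I 𝓘(ℝ) f x (Z x) : ℝ)) := by
  by_cases h0 : f x₀ = 0
  · obtain ⟨U, hU, Z, hZ, hpos⟩ := exists_vectorField_mfderiv_pos_nhds hf (hreg x₀ h0)
    exact ⟨U, hU, Z, hZ, fun x hx ↦ ⟨(hpos x hx).le, fun _ ↦ hpos x hx⟩⟩
  · refine ⟨{x | f x ≠ 0}, (isOpen_ne_fun hf.continuous continuous_const).mem_nhds h0, 0,
      (contMDiff_zeroSection ℝ (TangentSpace I : M → Type _)).contMDiffOn,
      fun x hx ↦ ⟨(map_zero _).ge, fun h ↦ (hx h).elim⟩⟩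

end

/-- On a Hausdorff σ-compact smooth manifold `M` (without boundary, modeled on a
finite-dimensional real vector space), for any smooth function `f : M → ℝ` whose differential is
nonzero at every point of `f⁻¹(0)`, there exists a smooth vector field `Z` on `M` which is
boundary-gradient-like for `f`: `df_p(Z p) ≥ 0` everywhere and `df_p(Z p) > 0` on `f⁻¹(0)`. -/
theorem stmt_1 {E : Type*} [NormedAddCommGroup E] [NormedSpace ℝ E] [FiniteDimensional ℝ E]
    {M : Type*} [TopologicalSpace M] [ChartedSpace E M]
    [IsManifold 𝓘(ℝ, E) (⊤ : ℕ∞) M] [T2Space M] [SigmaCompactSpace M]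
    (f : M → ℝ) (hf : ContMDiff 𝓘(ℝ, E) 𝓘(ℝ, ℝ) (⊤ : ℕ∞) f)
    (hreg : ∀ p : M, f p = 0 → mfderiv 𝓘(ℝ, E) 𝓘(ℝ, ℝ) f p ≠ 0) :
    ∃ Z : (p : M) → TangentSpace 𝓘(ℝ, E) p,
      ContMDiff 𝓘(ℝ, E) 𝓘(ℝ, E).tangent (⊤ : ℕ∞)
        (fun p : M => (⟨p, Z p⟩ : TangentBundle 𝓘(ℝ, E) M)) ∧
      (∀ p : M, (0:ℝ) ≤ (mfderiv 𝓘(ℝ, E) 𝓘(ℝ, ℝ) f p (Z p) : ℝ)) ∧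
      (∀ p : M, f p = 0 → (0:ℝ) < (mfderiv 𝓘(ℝ, E) 𝓘(ℝ, ℝ) f p (Z p) : ℝ)) := by
  obtain ⟨Z, hZ⟩ := exists_contMDiffSection_forall_mem_convex_of_local 𝓘(ℝ, E)
    (TangentSpace 𝓘(ℝ, E) : M → Type _) _
    (fun x ↦ convex_setOf_nonneg_and_pos (mfderiv 𝓘(ℝ, E) 𝓘(ℝ, ℝ) f x).toLinearMap (f x = 0))
    (exists_nhds_vectorField_gradientLike hf hreg)
  exact ⟨Z, Z.contMDiff, fun p ↦ (hZ p).1, fun p ↦ (hZ p).2⟩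
end

section
/- Let M be a Hausdorff, σ-compact C^∞ manifold without boundary modeled on a finite-dimensional real vector space, and let f₀, f₁ : M → ℝ be C^∞ functions which are regular equations of the same cooriented hypersurface: f₀⁻¹(0) = f₁⁻¹(0) =: M₀, for every p ∈ M₀ one has d(f₀)_p ≠ 0 and d(f₁)_p ≠ 0, and for every p ∈ M₀ there exists c > 0 with d(f₁)_p = c · d(f₀)_p. Then there exists a smooth vector field Z on M which is boundary-gradient-like for both f₀ and f₁ simultaneously: d(f₀)_p(Z p) ≥ 0 and d(f₁)_p(Z p) ≥ 0 for every p ∈ M, with both strict inequalities holding for every p ∈ M₀. -/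
/-!
Near a point of `M₀` pick a tangent vector `w` with `d(f₀)(w) > 0`; since `d(f₁) = c · d(f₀)` with
`c > 0`, also `d(f₁)(w) > 0`. Extending `w` by a local trivialisation of `TM` gives a smooth local
field on which both derivatives stay positive; away from `M₀` the zero field will do. At each point
the admissible vectors form a convex set, so a smooth partition of unity glues these local fields.
-/

open Manifold Bundle Set Filter Topology ContDiff

theorem ContinuousLinearMap.exists_pos_apply {E : Type*} [TopologicalSpace E] [AddCommGroup E]
    [Module ℝ E] {φ : E →L[ℝ] ℝ} (hφ : φ ≠ 0) : ∃ v, 0 < φ v := by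
  obtain ⟨v, hv⟩ := DFunLike.ne_iff.1 hφ
  rcases hv.lt_or_gt with hneg | hpos
  · exact ⟨-v, by simpa using hneg⟩
  · exact ⟨v, hpos⟩

theorem convex_setOf_nonneg_and_imp_pos {E : Type*} [AddCommGroup E] [Module ℝ E]
    (φ : E →ₗ[ℝ] ℝ) (P : Prop) : Convex ℝ {v | 0 ≤ φ v ∧ (P → 0 < φ v)} := by
  by_cases hP : P
  · simpa [hP, and_iff_right_of_imp le_of_lt] using convex_halfSpace_gt φ.isLinear 0
  · simpa [hP] using convex_halfSpace_ge φ.isLinear 0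

theorem exists_contMDiffOn_section_eq {𝕜 : Type*} [NontriviallyNormedField 𝕜]
    {EB : Type*} [NormedAddCommGroup EB] [NormedSpace 𝕜 EB] {HB : Type*} [TopologicalSpace HB]
    {IB : ModelWithCorners 𝕜 EB HB} {B : Type*} [TopologicalSpace B] [ChartedSpace HB B]
    {F : Type*} [NormedAddCommGroup F] [NormedSpace 𝕜 F] {V : B → Type*}
    [∀ x, AddCommGroup (V x)] [∀ x, Module 𝕜 (V x)] [∀ x, TopologicalSpace (V x)]
    [TopologicalSpace (TotalSpace F V)] [FiberBundle F V] [VectorBundle 𝕜 F V]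
    {n : WithTop ℕ∞} [ContMDiffVectorBundle n F V IB] (q : B) (w : V q) :
    ∃ σ : (x : B) → V x, ∃ U : Set B, IsOpen U ∧ q ∈ U ∧ σ q = w ∧
      ContMDiffOn IB (IB.prod 𝓘(𝕜, F)) n (fun x ↦ TotalSpace.mk' F x (σ x)) U := by
  set e := trivializationAt F V q
  have hq : q ∈ e.baseSet := FiberBundle.mem_baseSet_trivializationAt' q
  refine ⟨fun x ↦ e.symm x (e ⟨q, w⟩).2, e.baseSet, e.open_baseSet, hq,
    e.symm_apply_apply_mk hq w, ?_⟩
  refine (e.contMDiffOn_symm.comp (contMDiffOn_id.prodMk contMDiffOn_const) fun x hx ↦ ?_).congr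
    fun x hx ↦ e.mk_symm hx _
  simpa [e.mem_target] using hx

section Manifold

variable {E : Type*} [NormedAddCommGroup E] [NormedSpace ℝ E] {H : Type*} [TopologicalSpace H]
  (I : ModelWithCorners ℝ E H) {M : Type*} [TopologicalSpace M] [ChartedSpace H M]

theorem continuousOn_mfderiv_apply [IsManifold I 1 M] {F : Type*} [NormedAddCommGroup F]
    [NormedSpace ℝ F] {f : M → F} {n : WithTop ℕ∞} (hf : ContMDiff I 𝓘(ℝ, F) n f) (hn : 1 ≤ n)
    {σ : (x : M) → TangentSpace I x} {U : Set M}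
    (hσ : ContinuousOn (fun x ↦ (⟨x, σ x⟩ : TangentBundle I M)) U) :
    ContinuousOn (fun x ↦ mfderiv I 𝓘(ℝ, F) f x (σ x)) U :=
  ((continuous_snd.comp (tangentBundleModelSpaceHomeomorph 𝓘(ℝ, F)).continuous).comp
    (hf.continuous_tangentMap hn)).comp_continuousOn hσ

def boundaryGradientLikeVectors (f : M → ℝ) (p : M) : Set (TangentSpace I p) :=
  {v | (0 : ℝ) ≤ (mfderiv I 𝓘(ℝ) f p v : ℝ) ∧ (f p = 0 → (0 : ℝ) < (mfderiv I 𝓘(ℝ) f p v : ℝ))}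

variable {I}

theorem convex_boundaryGradientLikeVectors (f : M → ℝ) (p : M) :
    Convex ℝ (boundaryGradientLikeVectors I f p) :=
  convex_setOf_nonneg_and_imp_pos (mfderiv I 𝓘(ℝ) f p : TangentSpace I p →L[ℝ] ℝ).toLinearMap _

theorem zero_mem_boundaryGradientLikeVectors {f : M → ℝ} {p : M} (hp : f p ≠ 0) :
    0 ∈ boundaryGradientLikeVectors I f p :=
  ⟨(map_zero _).ge, fun h ↦ absurd h hp⟩

theorem mem_boundaryGradientLikeVectors_of_pos {f : M → ℝ} {p : M} {v : TangentSpace I p}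
    (hv : (0 : ℝ) < (mfderiv I 𝓘(ℝ) f p v : ℝ)) : v ∈ boundaryGradientLikeVectors I f p :=
  ⟨hv.le, fun _ ↦ hv⟩

variable [IsManifold I ∞ M]

theorem exists_contMDiffOn_section_mfderiv_pos {f₀ f₁ : M → ℝ}
    (hf₀ : ContMDiff I 𝓘(ℝ) 1 f₀) (hf₁ : ContMDiff I 𝓘(ℝ) 1 f₁) {q : M} {w : TangentSpace I q}
    (hw₀ : (0 : ℝ) < (mfderiv I 𝓘(ℝ) f₀ q w : ℝ)) (hw₁ : (0 : ℝ) < (mfderiv I 𝓘(ℝ) f₁ q w : ℝ)) :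
    ∃ U ∈ 𝓝 q, ∃ σ : (p : M) → TangentSpace I p,
      ContMDiffOn I I.tangent ∞ (fun p ↦ (⟨p, σ p⟩ : TangentBundle I M)) U ∧
      ∀ p ∈ U, (0 : ℝ) < (mfderiv I 𝓘(ℝ) f₀ p (σ p) : ℝ) ∧
        (0 : ℝ) < (mfderiv I 𝓘(ℝ) f₁ p (σ p) : ℝ) := by
  obtain ⟨σ, U, hU, hqU, rfl, hσ⟩ := exists_contMDiffOn_section_eq (IB := I) (F := E) (n := ∞) q w
  have hV {f : M → ℝ} (hf : ContMDiff I 𝓘(ℝ) 1 f) :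
      IsOpen (U ∩ {p | (0 : ℝ) < (mfderiv I 𝓘(ℝ) f p (σ p) : ℝ)}) :=
    (continuousOn_mfderiv_apply I hf le_rfl hσ.continuousOn).isOpen_inter_preimage hU isOpen_Ioi
  exact ⟨_, ((hV hf₀).inter (hV hf₁)).mem_nhds ⟨⟨hqU, hw₀⟩, ⟨hqU, hw₁⟩⟩, σ,
    hσ.mono fun p hp ↦ hp.1.1, fun p hp ↦ ⟨hp.1.2, hp.2.2⟩⟩

theorem exists_contMDiffOn_section_mem_boundaryGradientLikeVectors {f₀ f₁ : M → ℝ}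
    (hf₀ : ContMDiff I 𝓘(ℝ) 1 f₀) (hf₁ : ContMDiff I 𝓘(ℝ) 1 f₁)
    (hlevel : f₀ ⁻¹' {0} = f₁ ⁻¹' {0})
    (hreg₀ : ∀ p, f₀ p = 0 → mfderiv I 𝓘(ℝ) f₀ p ≠ 0)
    (hcoor : ∀ p, f₀ p = 0 → ∃ c : ℝ, 0 < c ∧ mfderiv I 𝓘(ℝ) f₁ p = c • mfderiv I 𝓘(ℝ) f₀ p)
    (q : M) :
    ∃ U ∈ 𝓝 q, ∃ σ : (p : M) → TangentSpace I p,
      ContMDiffOn I I.tangent ∞ (fun p ↦ (⟨p, σ p⟩ : TangentBundle I M)) U ∧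
      ∀ p ∈ U, σ p ∈ boundaryGradientLikeVectors I f₀ p ∩ boundaryGradientLikeVectors I f₁ p := by
  by_cases hq : f₀ q = 0
  · obtain ⟨w, hw₀⟩ := ContinuousLinearMap.exists_pos_apply (hreg₀ q hq)
    obtain ⟨c, hc, hdf⟩ := hcoor q hq
    have hw₁ : (0 : ℝ) < (mfderiv I 𝓘(ℝ) f₁ q w : ℝ) := by
      rw [hdf]
      exact mul_pos hc hw₀
    obtain ⟨U, hU, σ, hσ, hpos⟩ := exists_contMDiffOn_section_mfderiv_pos hf₀ hf₁ hw₀ hw₁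
    exact ⟨U, hU, σ, hσ, fun p hp ↦ ⟨mem_boundaryGradientLikeVectors_of_pos (hpos p hp).1,
      mem_boundaryGradientLikeVectors_of_pos (hpos p hp).2⟩⟩
  · have hzero (p : M) : f₀ p = 0 ↔ f₁ p = 0 := by simpa using Set.ext_iff.1 hlevel p
    refine ⟨{p | f₀ p ≠ 0}, (isOpen_ne_fun hf₀.continuous continuous_const).mem_nhds hq,
      fun _ ↦ 0, (contMDiff_zeroSection ℝ (TangentSpace I)).contMDiffOn, fun p hp ↦ ?_⟩
    exact ⟨zero_mem_boundaryGradientLikeVectors hp,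
      zero_mem_boundaryGradientLikeVectors fun h ↦ hp ((hzero p).2 h)⟩

end Manifold

theorem stmt_2_general {E : Type*} [NormedAddCommGroup E] [NormedSpace ℝ E] [FiniteDimensional ℝ E]
    {M : Type*} [TopologicalSpace M] [ChartedSpace E M]
    [IsManifold 𝓘(ℝ, E) (⊤ : ℕ∞) M] [T2Space M] [SigmaCompactSpace M]
    (f₀ f₁ : M → ℝ)
    (hf₀ : ContMDiff 𝓘(ℝ, E) 𝓘(ℝ, ℝ) (⊤ : ℕ∞) f₀)
    (hf₁ : ContMDiff 𝓘(ℝ, E) 𝓘(ℝ, ℝ) (⊤ : ℕ∞) f₁)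
    (hlevel : f₀ ⁻¹' {0} = f₁ ⁻¹' {0})
    (hreg₀ : ∀ p : M, f₀ p = 0 → mfderiv 𝓘(ℝ, E) 𝓘(ℝ, ℝ) f₀ p ≠ 0)
    (hcoor : ∀ p : M, f₀ p = 0 → ∃ c : ℝ, 0 < c ∧
      mfderiv 𝓘(ℝ, E) 𝓘(ℝ, ℝ) f₁ p = c • mfderiv 𝓘(ℝ, E) 𝓘(ℝ, ℝ) f₀ p) :
    ∃ Z : (p : M) → TangentSpace 𝓘(ℝ, E) p,
      ContMDiff 𝓘(ℝ, E) 𝓘(ℝ, E).tangent (⊤ : ℕ∞)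
        (fun p : M => (⟨p, Z p⟩ : TangentBundle 𝓘(ℝ, E) M)) ∧
      (∀ p : M, (0:ℝ) ≤ (mfderiv 𝓘(ℝ, E) 𝓘(ℝ, ℝ) f₀ p (Z p) : ℝ)) ∧
      (∀ p : M, (0:ℝ) ≤ (mfderiv 𝓘(ℝ, E) 𝓘(ℝ, ℝ) f₁ p (Z p) : ℝ)) ∧
      (∀ p : M, f₀ p = 0 → (0:ℝ) < (mfderiv 𝓘(ℝ, E) 𝓘(ℝ, ℝ) f₀ p (Z p) : ℝ)) ∧
      (∀ p : M, f₁ p = 0 → (0:ℝ) < (mfderiv 𝓘(ℝ, E) 𝓘(ℝ, ℝ) f₁ p (Z p) : ℝ)) := by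
  obtain ⟨Z, hZ⟩ := exists_contMDiffSection_forall_mem_convex_of_local 𝓘(ℝ, E)
    (n := ⊤) (F_fiber := E) (TangentSpace 𝓘(ℝ, E) (M := M))
    (fun p ↦ boundaryGradientLikeVectors _ f₀ p ∩ boundaryGradientLikeVectors _ f₁ p)
    (fun p ↦ (convex_boundaryGradientLikeVectors f₀ p).inter
      (convex_boundaryGradientLikeVectors f₁ p))
    (exists_contMDiffOn_section_mem_boundaryGradientLikeVectors (hf₀.of_le (by simp))
      (hf₁.of_le (by simp)) hlevel hreg₀ hcoor)
  exact ⟨Z, Z.contMDiff, fun p ↦ (hZ p).1.1, fun p ↦ (hZ p).2.1, fun p ↦ (hZ p).1.2,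
    fun p ↦ (hZ p).2.2⟩

/-- If `f₀, f₁` are smooth regular equations of the same cooriented hypersurface
`M₀ = f₀⁻¹(0) = f₁⁻¹(0)` in a Hausdorff σ-compact smooth manifold `M`, then there is a smooth
vector field `Z` which is boundary-gradient-like for both `f₀` and `f₁` simultaneously. -/
theorem stmt_2 {E : Type*} [NormedAddCommGroup E] [NormedSpace ℝ E] [FiniteDimensional ℝ E]
    {M : Type*} [TopologicalSpace M] [ChartedSpace E M]
    [IsManifold 𝓘(ℝ, E) (⊤ : ℕ∞) M] [T2Space M] [SigmaCompactSpace M]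
    (f₀ f₁ : M → ℝ)
    (hf₀ : ContMDiff 𝓘(ℝ, E) 𝓘(ℝ, ℝ) (⊤ : ℕ∞) f₀)
    (hf₁ : ContMDiff 𝓘(ℝ, E) 𝓘(ℝ, ℝ) (⊤ : ℕ∞) f₁)
    (hlevel : f₀ ⁻¹' {0} = f₁ ⁻¹' {0})
    (hreg₀ : ∀ p : M, f₀ p = 0 → mfderiv 𝓘(ℝ, E) 𝓘(ℝ, ℝ) f₀ p ≠ 0)
    (hreg₁ : ∀ p : M, f₁ p = 0 → mfderiv 𝓘(ℝ, E) 𝓘(ℝ, ℝ) f₁ p ≠ 0)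
    (hcoor : ∀ p : M, f₀ p = 0 → ∃ c : ℝ, 0 < c ∧
      mfderiv 𝓘(ℝ, E) 𝓘(ℝ, ℝ) f₁ p = c • mfderiv 𝓘(ℝ, E) 𝓘(ℝ, ℝ) f₀ p) :
    ∃ Z : (p : M) → TangentSpace 𝓘(ℝ, E) p,
      ContMDiff 𝓘(ℝ, E) 𝓘(ℝ, E).tangent (⊤ : ℕ∞)
        (fun p : M => (⟨p, Z p⟩ : TangentBundle 𝓘(ℝ, E) M)) ∧
      (∀ p : M, (0:ℝ) ≤ (mfderiv 𝓘(ℝ, E) 𝓘(ℝ, ℝ) f₀ p (Z p) : ℝ)) ∧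
      (∀ p : M, (0:ℝ) ≤ (mfderiv 𝓘(ℝ, E) 𝓘(ℝ, ℝ) f₁ p (Z p) : ℝ)) ∧
      (∀ p : M, f₀ p = 0 → (0:ℝ) < (mfderiv 𝓘(ℝ, E) 𝓘(ℝ, ℝ) f₀ p (Z p) : ℝ)) ∧
      (∀ p : M, f₁ p = 0 → (0:ℝ) < (mfderiv 𝓘(ℝ, E) 𝓘(ℝ, ℝ) f₁ p (Z p) : ℝ)) :=
  stmt_2_general f₀ f₁ hf₀ hf₁ hlevel hreg₀ hcoor
end

section
/- Let E be a real normed vector space, f₀, f₁ : E → ℝ differentiable functions, and Z : E → E a map. Define G : E × ℝ × ℝ → ℝ by G(p,s,t) = s² + t·f₁(p) + (1−t)·f₀(p). Fix (p,s,t) such that D := 2s² + t·Df₁(p)(Z p) + (1−t)·Df₀(p)(Z p) ≠ 0, and set c := (f₁(p) − f₀(p))/D. Then the Fréchet derivative of G at (p,s,t) applied to the vector (c·Z p, c·s, −1) equals 0. (That is, the vector field −∂_t + X_t, where X_t = ((f₁−f₀)/dG(Z+s∂_s))·(Z + s∂_s), is everywhere tangent to the level sets of G.) -/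
theorem fderiv_sq_add_lineMap_apply {E : Type*} [NormedAddCommGroup E] [NormedSpace ℝ E]
    {f₀ f₁ : E → ℝ} {p : E} (hf₀ : DifferentiableAt ℝ f₀ p) (hf₁ : DifferentiableAt ℝ f₁ p)
    (s t : ℝ) (v : E) (a b : ℝ) :
    fderiv ℝ (fun x : E × ℝ × ℝ => x.2.1 ^ 2 + x.2.2 * f₁ x.1 + (1 - x.2.2) * f₀ x.1)
        (p, s, t) (v, a, b) =
      2 * s * a + t * fderiv ℝ f₁ p v + (1 - t) * fderiv ℝ f₀ p v + b * (f₁ p - f₀ p) := by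
  have hs : HasFDerivAt (fun x : E × ℝ × ℝ => x.2.1)
      ((ContinuousLinearMap.fst ℝ ℝ ℝ).comp (ContinuousLinearMap.snd ℝ E (ℝ × ℝ))) (p, s, t) :=
    hasFDerivAt_fst.comp _ hasFDerivAt_snd
  have ht : HasFDerivAt (fun x : E × ℝ × ℝ => x.2.2)
      ((ContinuousLinearMap.snd ℝ ℝ ℝ).comp (ContinuousLinearMap.snd ℝ E (ℝ × ℝ))) (p, s, t) :=
    hasFDerivAt_snd.comp _ hasFDerivAt_snd
  have hfst : HasFDerivAt (Prod.fst : E × ℝ × ℝ → E)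
      (ContinuousLinearMap.fst ℝ E (ℝ × ℝ)) (p, s, t) := hasFDerivAt_fst
  have h₀ := hf₀.hasFDerivAt.comp (p, s, t) hfst
  have h₁ := hf₁.hasFDerivAt.comp (p, s, t) hfst
  have hG : HasFDerivAt
      (fun x : E × ℝ × ℝ => x.2.1 ^ 2 + x.2.2 * f₁ x.1 + (1 - x.2.2) * f₀ x.1) _ (p, s, t) :=
    ((hs.pow 2).add (ht.mul h₁)).add (((hasFDerivAt_const 1 _).sub ht).mul h₀)
  rw [hG.fderiv]
  simp only [Nat.add_one_sub_one, pow_one, nsmul_eq_mul, Nat.cast_ofNat, Function.comp_apply,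
    Pi.sub_apply, zero_sub, smul_neg, add_apply, smul_apply, neg_apply,
    ContinuousLinearMap.comp_apply, ContinuousLinearMap.coe_snd', ContinuousLinearMap.coe_fst',
    smul_eq_mul]
  ring

/-- For `G(p,s,t) = s² + t·f₁(p) + (1-t)·f₀(p)`, at a point where
`D = 2s² + t·Df₁(p)(Z p) + (1-t)·Df₀(p)(Z p) ≠ 0`, setting `c = (f₁ p − f₀ p)/D`, the derivative
of `G` applied to the vector `(c·Z p, c·s, −1)` vanishes; i.e. the vector field `−∂_t + X_t` is
tangent to the level sets of `G`. -/
theorem stmt_4 {E : Type*} [NormedAddCommGroup E] [NormedSpace ℝ E]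
    (f₀ f₁ : E → ℝ) (Z : E → E)
    (hf₀ : Differentiable ℝ f₀) (hf₁ : Differentiable ℝ f₁)
    (p : E) (s t : ℝ) (D c : ℝ)
    (hD : D = 2 * s ^ 2 + t * fderiv ℝ f₁ p (Z p) + (1 - t) * fderiv ℝ f₀ p (Z p))
    (hD0 : D ≠ 0)
    (hc : c = (f₁ p - f₀ p) / D) :
    fderiv ℝ (fun x : E × ℝ × ℝ => x.2.1 ^ 2 + x.2.2 * f₁ x.1 + (1 - x.2.2) * f₀ x.1)
      (p, s, t) (c • Z p, c * s, -1) = 0 := by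
  have hcD : c * D = f₁ p - f₀ p := by rw [hc, div_mul_cancel₀ _ hD0]
  rw [fderiv_sq_add_lineMap_apply (hf₀ p) (hf₁ p), map_smul, map_smul, smul_eq_mul, smul_eq_mul,
    ← hcD, hD]
  ring
end

section
/- Let E be a real normed vector space, λ : E → (E →L[ℝ] ℝ) a differentiable 1-form, Z : E → E a differentiable vector field with ι_Z dλ = λ, and h : E × ℝ → ℝ a differentiable function such that for every (p,θ) ∈ E × ℝ the partial Fréchet derivative of h in the first variable satisfies D_p h(p,θ)(Z p) = h(p,θ). Fix t ∈ ℝ and define the 1-form Λ_t on Ē := E × ℝ × ℝ (with points written (p,s,θ)) by Λ_t(p,s,θ)(v,c,d) := λ_p(v) + (2s + t·h(p,θ))·d. Then Λ_t is differentiable and its exterior derivative satisfies, for every (p,s,θ) and every (v,c,d) ∈ E × ℝ × ℝ: dΛ_t at (p,s,θ) evaluated on the pair ((Z p, s, 0), (v,c,d)) equals Λ_t(p,s,θ)(v,c,d). (That is, ι_{Z^𝒟} dΛ_t = Λ_t where Z^𝒟 = Z + s∂_s: the vector field Z^𝒟 is a Liouville vector field for each of the 1-forms λ + (2s + t·h_θ)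 dθ.) -/
/-!
Write `Λ_t = π^*λ + f dθ` with `π(p, s, θ) = p` and `f(p, s, θ) = 2s + t·h(p, θ)`.
Since `π` maps `Z^𝒟` to `Z`, contracting `Z^𝒟` into `d(π^*λ) = π^*dλ` returns `π^*λ`.
For the second summand, `ι_{Z^𝒟}(df ∧ dθ) = df(Z^𝒟) dθ - dθ(Z^𝒟) df = f dθ`, because `dθ` kills
`Z^𝒟` and `f` is homogeneous of degree one along `Z^𝒟`: `s∂_s` scales `2s`, and `Z` scales `h`.
-/

open ContinuousLinearMap

section

variable {𝕜 F G : Type*} [NontriviallyNormedField 𝕜]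
  [NormedAddCommGroup F] [NormedSpace 𝕜 F] [NormedAddCommGroup G] [NormedSpace 𝕜 G]

/-- `ι_X dα = α` at the point `x`. -/
def IsLiouvilleAt (α : G → G →L[𝕜] 𝕜) (X x : G) : Prop :=
  ∀ v, fderiv 𝕜 α x X v - fderiv 𝕜 α x v X = α x v

theorem hasFDerivAt_comp_clm_right {α : F → F →L[𝕜] 𝕜} (L : G →L[𝕜] F) {x : G}
    (hα : DifferentiableAt 𝕜 α (L x)) :
    HasFDerivAt (fun y => (α (L y)).comp L)
      (((compL 𝕜 G F 𝕜).flip L).comp ((fderiv 𝕜 α (L x)).comp L)) x :=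
  ((compL 𝕜 G F 𝕜).flip L).hasFDerivAt.comp x (hα.hasFDerivAt.comp x L.hasFDerivAt)

theorem IsLiouvilleAt.comp_clm_right {α : F → F →L[𝕜] 𝕜} {L : G →L[𝕜] F} {X x : G}
    (hα : DifferentiableAt 𝕜 α (L x)) (hαL : IsLiouvilleAt α (L X) (L x)) :
    IsLiouvilleAt (fun y => (α (L y)).comp L) X x := by
  intro v
  simpa [(hasFDerivAt_comp_clm_right L hα).fderiv] using hαL (L v)

theorem IsLiouvilleAt.add_smul_const {α : G → G →L[𝕜] 𝕜} {f : G → 𝕜} {ℓ : G →L[𝕜] 𝕜}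
    {X x : G} (hα : DifferentiableAt 𝕜 α x) (hf : DifferentiableAt 𝕜 f x)
    (hαX : IsLiouvilleAt α X x) (hfX : fderiv 𝕜 f x X = f x) (hℓX : ℓ X = 0) :
    IsLiouvilleAt (fun y => α y + f y • ℓ) X x := by
  intro v
  have hD : HasFDerivAt (fun y => α y + f y • ℓ)
      (fderiv 𝕜 α x + (fderiv 𝕜 f x).smulRight ℓ) x :=
    hα.hasFDerivAt.add (hf.hasFDerivAt.smul_const ℓ)
  rw [hD.fderiv]
  simp only [add_apply, smulRight_apply, smul_apply, smul_eq_mul, hfX, hℓX, ← hαX v]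
  ring

theorem fderiv_comp_prodMk_left_apply {h : F × 𝕜 → 𝕜} {p : F} {θ : 𝕜}
    (hh : DifferentiableAt 𝕜 h (p, θ)) (w : F) :
    fderiv 𝕜 (fun q => h (q, θ)) p w = fderiv 𝕜 h (p, θ) (w, 0) := by
  have hD : HasFDerivAt (fun q => h (q, θ)) ((fderiv 𝕜 h (p, θ)).comp (inl 𝕜 F 𝕜)) p :=
    hh.hasFDerivAt.comp p (hasFDerivAt_prodMk_left p θ)
  simp [hD.fderiv]

def dThetaCoeff (h : F × 𝕜 → 𝕜) (t : 𝕜) (x : F × 𝕜 × 𝕜) : 𝕜 :=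
  2 * x.2.1 + t * h (x.1, x.2.2)

theorem hasFDerivAt_dThetaCoeff {h : F × 𝕜 → 𝕜} (t : 𝕜) {x : F × 𝕜 × 𝕜}
    (hh : DifferentiableAt 𝕜 h (x.1, x.2.2)) :
    HasFDerivAt (dThetaCoeff h t)
      ((2 : 𝕜) • (fst 𝕜 𝕜 𝕜).comp (snd 𝕜 F (𝕜 × 𝕜)) + t • (fderiv 𝕜 h (x.1, x.2.2)).comp
        ((fst 𝕜 F (𝕜 × 𝕜)).prod ((snd 𝕜 𝕜 𝕜).comp (snd 𝕜 F (𝕜 × 𝕜))))) x :=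
  (((fst 𝕜 𝕜 𝕜).comp (snd 𝕜 F (𝕜 × 𝕜))).hasFDerivAt.const_mul 2).add
    ((hh.hasFDerivAt.comp x ((fst 𝕜 F (𝕜 × 𝕜)).prod
      ((snd 𝕜 𝕜 𝕜).comp (snd 𝕜 F (𝕜 × 𝕜)))).hasFDerivAt).const_mul t)

theorem fderiv_dThetaCoeff_eq_self {h : F × 𝕜 → 𝕜} (t : 𝕜) {Z : F → F} {p : F} {s θ : 𝕜}
    (hh : DifferentiableAt 𝕜 h (p, θ))
    (hhZ : fderiv 𝕜 (fun q => h (q, θ)) p (Z p) = h (p, θ)) :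
    fderiv 𝕜 (dThetaCoeff h t) (p, s, θ) (Z p, s, 0) = dThetaCoeff h t (p, s, θ) := by
  rw [fderiv_comp_prodMk_left_apply hh] at hhZ
  simp [(hasFDerivAt_dThetaCoeff t (x := (p, s, θ)) hh).fderiv, hhZ, dThetaCoeff]

end

theorem stmt_9_general {E : Type*} [NormedAddCommGroup E] [NormedSpace ℝ E]
    (lam : E → (E →L[ℝ] ℝ)) (Z : E → E)
    (hlam : Differentiable ℝ lam)
    (hLiouville : ∀ p v : E,
      (fderiv ℝ lam p (Z p)) v - (fderiv ℝ lam p v) (Z p) = lam p v)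
    (h : E × ℝ → ℝ) (hh : Differentiable ℝ h)
    (hhZ : ∀ (p : E) (θ : ℝ), fderiv ℝ (fun q : E => h (q, θ)) p (Z p) = h (p, θ))
    (t : ℝ)
    (Lam : E × ℝ × ℝ → ((E × ℝ × ℝ) →L[ℝ] ℝ))
    (hLam : ∀ (p : E) (s θ : ℝ) (v : E) (c d : ℝ),
      Lam (p, s, θ) (v, c, d) = lam p v + (2 * s + t * h (p, θ)) * d) :
    Differentiable ℝ Lam ∧
    ∀ (p : E) (s θ : ℝ) (v : E) (c d : ℝ),
      (fderiv ℝ Lam (p, s, θ) (Z p, s, 0)) (v, c, d)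
        - (fderiv ℝ Lam (p, s, θ) (v, c, d)) (Z p, s, 0)
      = Lam (p, s, θ) (v, c, d) := by
  set π := fst ℝ E (ℝ × ℝ)
  set dθ := (snd ℝ ℝ ℝ).comp (snd ℝ E (ℝ × ℝ))
  have hLam_eq : Lam = fun x => (lam (π x)).comp π + dThetaCoeff h t x • dθ := by
    funext ⟨p, s, θ⟩
    refine ContinuousLinearMap.ext fun ⟨v, c, d⟩ => ?_
    simp [π, dθ, hLam, dThetaCoeff, mul_comm]
  subst hLam_eq
  have hpull : Differentiable ℝ fun x => (lam (π x)).comp π :=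
    fun x => (hasFDerivAt_comp_clm_right π (hlam _)).differentiableAt
  have hcoeff : Differentiable ℝ (dThetaCoeff h t) :=
    fun x => (hasFDerivAt_dThetaCoeff t (hh _)).differentiableAt
  refine ⟨hpull.add (hcoeff.smul_const dθ), fun p s θ v c d => ?_⟩
  have hpull_liouville : IsLiouvilleAt (fun y => (lam (π y)).comp π) (Z p, s, 0) (p, s, θ) :=
    IsLiouvilleAt.comp_clm_right (hlam p) (hLiouville p)
  exact hpull_liouville.add_smul_const (hpull _) (hcoeff _)
    (fderiv_dThetaCoeff_eq_self t (hh _) (hhZ p θ)) rfl (v, c, d)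

/-- If `ι_Z dλ = λ` on `E` and `h : E × ℝ → ℝ` satisfies `D_p h(p,θ)(Z p) = h(p,θ)`,
then for each `t`, the 1-form `Λ_t(p,s,θ)(v,c,d) = λ_p(v) + (2s + t·h(p,θ))·d` on `E × ℝ × ℝ` is
differentiable and the vector field `Z^𝒟 = (Z p, s, 0)` is Liouville for it:
`ι_{Z^𝒟} dΛ_t = Λ_t`. -/
theorem stmt_9 {E : Type*} [NormedAddCommGroup E] [NormedSpace ℝ E]
    (lam : E → (E →L[ℝ] ℝ)) (Z : E → E)
    (hlam : Differentiable ℝ lam) (hZ : Differentiable ℝ Z)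
    (hLiouville : ∀ p v : E,
      (fderiv ℝ lam p (Z p)) v - (fderiv ℝ lam p v) (Z p) = lam p v)
    (h : E × ℝ → ℝ) (hh : Differentiable ℝ h)
    (hhZ : ∀ (p : E) (θ : ℝ), fderiv ℝ (fun q : E => h (q, θ)) p (Z p) = h (p, θ))
    (t : ℝ)
    (Lam : E × ℝ × ℝ → ((E × ℝ × ℝ) →L[ℝ] ℝ))
    (hLam : ∀ (p : E) (s θ : ℝ) (v : E) (c d : ℝ),
      Lam (p, s, θ) (v, c, d) = lam p v + (2 * s + t * h (p, θ)) * d) :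
    Differentiable ℝ Lam ∧
    ∀ (p : E) (s θ : ℝ) (v : E) (c d : ℝ),
      (fderiv ℝ Lam (p, s, θ) (Z p, s, 0)) (v, c, d)
        - (fderiv ℝ Lam (p, s, θ) (v, c, d)) (Z p, s, 0)
      = Lam (p, s, θ) (v, c, d) :=
  stmt_9_general lam Z hlam hLiouville h hh hhZ t Lam hLam
end

section
/- Let E be a real normed vector space, λ : E → (E →L[ℝ] ℝ) a 1-form, and φ : ℝ × E → E a differentiable map such that each φ_θ := φ(θ, ·) preserves λ, i.e. λ_{φ(θ,q)}((D_q φ_θ)(v)) = λ_q(v) for all θ ∈ ℝ, q, v ∈ E. Define h : ℝ × E → ℝ by h(θ,q) := λ_{φ(θ,q)}(∂_θ φ(θ,q)), where ∂_θ φ is the partial derivative of φ in the ℝ-variable. Define Ψ : E × ℝ × ℝ → E × ℝ × ℝ by Ψ(q,s,θ) := (φ(θ,q), s, θ), and define the 1-form λ^𝒟 on E × ℝ × ℝ by λ^𝒟(p,s,θ)(v,c,d) := λ_p(v) + 2s·d. Then the pullback Ψ*λ^𝒟, given at (q,s,θ) by (v,c,d) ↦ λ^𝒟(Ψ(q,s,θ))((DΨ(q,s,θ))(v,c,d)),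 equals the 1-form (v,c,d) ↦ λ_q(v) + (2s + h(θ,q))·d. (That is, Ψ*(λ + 2s dθ) = λ + (2s + h_θ) dθ.) -/
/-! The derivative of `Ψ` at `(q,s,θ)` sends `(v,c,d)` to `(Dφ(θ,q)(d,v), c, d)`, and
`Dφ(θ,q)(d,v)` splits into the partial derivatives `D_qφ_θ v + d • ∂_θφ`. Applying `λ`, the first
term gives `λ_q(v)` by invariance and the second gives `d · h(θ,q)`. -/

section

variable {𝕜 : Type*} [NontriviallyNormedField 𝕜]
  {X F G H : Type*} [NormedAddCommGroup X] [NormedSpace 𝕜 X]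
  [NormedAddCommGroup F] [NormedSpace 𝕜 F] [NormedAddCommGroup G] [NormedSpace 𝕜 G]
  [NormedAddCommGroup H] [NormedSpace 𝕜 H]

theorem fderiv_apply_prod_eq_add_partials {f : F × G → H} {p : F × G}
    (hf : DifferentiableAt 𝕜 f p) (a : F) (b : G) :
    fderiv 𝕜 f p (a, b) =
      fderiv 𝕜 (fun x => f (x, p.2)) p.1 a + fderiv 𝕜 (fun y => f (p.1, y)) p.2 b := by
  have hfst : HasFDerivAt (fun x => f (x, p.2)) ((fderiv 𝕜 f p).comp (.inl 𝕜 F G)) p.1 :=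
    hf.hasFDerivAt.comp p.1 (hasFDerivAt_prodMk_left p.1 p.2)
  have hsnd : HasFDerivAt (fun y => f (p.1, y)) ((fderiv 𝕜 f p).comp (.inr 𝕜 F G)) p.2 :=
    hf.hasFDerivAt.comp p.2 (hasFDerivAt_prodMk_right p.1 p.2)
  rw [hfst.fderiv, hsnd.fderiv, ContinuousLinearMap.comp_apply, ContinuousLinearMap.comp_apply,
    ← map_add]
  simp

theorem fderiv_prodMk_comp_continuousLinearMap_apply {f : F → H} {x : X}
    (L : X →L[𝕜] F) (P : X →L[𝕜] G) (hf : DifferentiableAt 𝕜 f (L x)) (w : X) :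
    fderiv 𝕜 (fun y => (f (L y), P y)) x w = (fderiv 𝕜 f (L x) (L w), P w) := by
  have hD : HasFDerivAt (fun y => (f (L y), P y)) (((fderiv 𝕜 f (L x)).comp L).prod P) x :=
    (hf.hasFDerivAt.comp x L.hasFDerivAt).prodMk P.hasFDerivAt
  rw [hD.fderiv]
  rfl

end

/-- If each `φ_θ` preserves the 1-form `λ`, then the pullback of
`λ^𝒟 = λ + 2s dθ` under `Ψ(q,s,θ) = (φ(θ,q), s, θ)` is the 1-form `λ + (2s + h_θ) dθ`, where
`h(θ,q) = λ_{φ(θ,q)}(∂_θ φ(θ,q))`. -/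
theorem stmt_10 {E : Type*} [NormedAddCommGroup E] [NormedSpace ℝ E]
    (lam : E → (E →L[ℝ] ℝ))
    (φ : ℝ × E → E) (hφ : Differentiable ℝ φ)
    (hpres : ∀ (θ : ℝ) (q v : E),
      lam (φ (θ, q)) (fderiv ℝ (fun x : E => φ (θ, x)) q v) = lam q v)
    (h : ℝ → E → ℝ)
    (hh : ∀ (θ : ℝ) (q : E),
      h θ q = lam (φ (θ, q)) (fderiv ℝ (fun τ : ℝ => φ (τ, q)) θ 1))
    (Ψ : E × ℝ × ℝ → E × ℝ × ℝ)
    (hΨ : Ψ = fun x : E × ℝ × ℝ => (φ (x.2.2, x.1), x.2.1, x.2.2))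
    (lamD : E × ℝ × ℝ → ((E × ℝ × ℝ) →L[ℝ] ℝ))
    (hlamD : ∀ (p : E) (s θ : ℝ) (v : E) (c d : ℝ),
      lamD (p, s, θ) (v, c, d) = lam p v + 2 * s * d) :
    ∀ (q : E) (s θ : ℝ) (v : E) (c d : ℝ),
      lamD (Ψ (q, s, θ)) (fderiv ℝ Ψ (q, s, θ) (v, c, d))
        = lam q v + (2 * s + h θ q) * d := by
  intro q s θ v c d
  let L : E × ℝ × ℝ →L[ℝ] ℝ × E :=
    ((ContinuousLinearMap.snd ℝ ℝ ℝ).comp (ContinuousLinearMap.snd ℝ E (ℝ × ℝ))).prod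
      (ContinuousLinearMap.fst ℝ E (ℝ × ℝ))
  have hΨL : Ψ = fun x => (φ (L x), ContinuousLinearMap.snd ℝ E (ℝ × ℝ) x) := hΨ
  have hDΨ : fderiv ℝ Ψ (q, s, θ) (v, c, d) = (fderiv ℝ φ (θ, q) (d, v), c, d) := by
    rw [hΨL]
    exact fderiv_prodMk_comp_continuousLinearMap_apply L _ (hφ _) _
  have hdθ :
      fderiv ℝ (fun τ : ℝ => φ (τ, q)) θ d = d • fderiv ℝ (fun τ : ℝ => φ (τ, q)) θ 1 := by
    rw [← map_smul, smul_eq_mul, mul_one]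
  rw [hDΨ, hΨ, hlamD, fderiv_apply_prod_eq_add_partials (hφ _), map_add, hpres, hdθ, map_smul,
    ← hh, smul_eq_mul]
  ring
end

section
/- Let V be a finite-dimensional real vector space and ω : V → V → ℝ a nondegenerate alternating bilinear form. Let X, Z ∈ V with ω(X, Z) > 0. Set λ := ω(Z, ·) and β := ω(X, ·), and let η := ker λ ∩ ker β. Let J : V → V be a linear map with J ∘ J = −id and ω(Ju, Jv) = ω(u,v) for all u, v ∈ V. Then the following are equivalent: (a) λ = −β ∘ J (i.e. λ(v) = −β(Jv) for all v ∈ V); (b) J(η) = η and J X = Z. -/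
/-- Let `ω` be a linear symplectic form on a finite-dimensional real vector space,
`X, Z` with `ω(X,Z) > 0`, `λ = ω(Z,·)`, `β = ω(X,·)`, `η = ker λ ∩ ker β`, and `J` an
`ω`-invariant complex structure. Then `λ = −β ∘ J` iff (`J(η) = η` and `J X = Z`). -/
theorem stmt_12 {V : Type*} [AddCommGroup V] [Module ℝ V] [FiniteDimensional ℝ V]
    (ω : V →ₗ[ℝ] V →ₗ[ℝ] ℝ)
    (halt : ∀ v : V, ω v v = 0)
    (hnondeg : ∀ u : V, (∀ v : V, ω u v = 0) → u = 0)
    (X Z : V) (hXZ : 0 < ω X Z)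
    (η : Set V) (hη : η = {v : V | ω Z v = 0 ∧ ω X v = 0})
    (J : V →ₗ[ℝ] V)
    (hJ2 : ∀ v : V, J (J v) = -v)
    (hJω : ∀ u v : V, ω (J u) (J v) = ω u v) :
    (∀ v : V, ω Z v = -ω X (J v)) ↔ (J '' η = η ∧ J X = Z) := by
  have key : ∀ v : V, ω (J X) v = - ω X (J v) := by
    intro v
    have h1 := hJω X (J v)
    rw [hJ2 v, map_neg] at h1
    linarith
  constructor
  · intro h
    have hJX : J X = Z := by
      have h0 : ∀ v : V, ω (Z - J X) v = 0 := by
        intro v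
        have := h v
        have := key v
        simp only [map_sub, LinearMap.sub_apply]
        linarith
      have := hnondeg _ h0
      rw [sub_eq_zero] at this
      exact this.symm
    have hmem : ∀ v ∈ η, J v ∈ η := by
      intro v hv
      rw [hη] at hv ⊢
      obtain ⟨h1, h2⟩ := hv
      constructor
      · rw [← hJX, hJω]
        exact h2
      · have := h v
        linarith
    refine ⟨?_, hJX⟩
    ext v
    constructor
    · rintro ⟨w, hw, rfl⟩
      exact hmem w hw
    · intro hv
      refine ⟨-(J v), ?_, by rw [map_neg, hJ2]; simp⟩
      have : J v ∈ η := hmem v hv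
      rw [hη] at this ⊢
      simp only [map_neg, Set.mem_setOf_eq] at this ⊢
      constructor <;> linarith [this.1, this.2]
  · rintro ⟨-, hJX⟩
    intro v
    have := key v
    rw [hJX] at this
    linarith
end

section
/- Let V be a finite-dimensional real vector space and ω : V → V → ℝ a nondegenerate alternating bilinear form. Let X, Z ∈ V with ω(X, Z) > 0, and let η := {v ∈ V : ω(Z, v) = 0 and ω(X, v) = 0}. Then there exists a linear map J : V → V such that: J ∘ J = −id; ω(Ju, Jv) = ω(u,v) for all u, v ∈ V; ω(v, Jv) > 0 for every v ≠ 0 (J is ω-compatible); J X = Z; and J(η) = η. -/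
/-!
If `c = ω X Z ≠ 0`, then `V = span {X, Z} ⊕ η` with `η = ker ω(Z, ·) ∩ ker ω(X, ·)` the
`ω`-orthogonal of the plane, and `ω` restricted to `η` is again symplectic. In these coordinates
`ω u v = c⁻¹ (ω(X,u) ω(Z,v) - ω(Z,u) ω(X,v)) + ω(πu, πv)`, with `π` the projection onto `η`.
On the plane, `X ↦ Z, Z ↦ -X` is a compatible complex structure as soon as `c > 0`; on `η` one
exists by induction on the dimension, and the direct sum of the two is the required `J`.
-/

open LinearMap (BilinForm ker)
open Module

section

variable {V : Type*} [AddCommGroup V] [Module ℝ V]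

structure IsCompatibleComplexStructure (ω : BilinForm ℝ V) (J : V →ₗ[ℝ] V) : Prop where
  sq_eq_neg : ∀ v, J (J v) = -v
  invariant : ∀ u v, ω (J u) (J v) = ω u v
  pos : ∀ v, v ≠ 0 → 0 < ω v (J v)

lemma isCompatibleComplexStructure_zero [Subsingleton V] (ω : BilinForm ℝ V) :
    IsCompatibleComplexStructure ω 0 where
  sq_eq_neg _ := Subsingleton.elim _ _
  invariant u v := by simp [Subsingleton.elim u 0]
  pos v hv := absurd (Subsingleton.elim v 0) hv

lemma exists_pos_apply {ω : BilinForm ℝ V} (hnd : ω.SeparatingLeft) {X : V} (hX : X ≠ 0) :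
    ∃ Z, 0 < ω X Z := by
  obtain ⟨Z, hZ⟩ : ∃ Z, ω X Z ≠ 0 := by
    by_contra! h
    exact hX (hnd X h)
  rcases hZ.lt_or_gt with hneg | hpos
  · exact ⟨-Z, by simpa using hneg⟩
  · exact ⟨Z, hpos⟩

noncomputable section Pair

variable {ω : BilinForm ℝ V} {X Z : V}

def pairOrthogonal (ω : BilinForm ℝ V) (X Z : V) : Submodule ℝ V :=
  ker (ω Z) ⊓ ker (ω X)

@[simp]
lemma mem_pairOrthogonal {v : V} : v ∈ pairOrthogonal ω X Z ↔ ω Z v = 0 ∧ ω X v = 0 :=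
  Iff.rfl

lemma finrank_pairOrthogonal_lt [FiniteDimensional ℝ V] (hω : ω.IsAlt) (hc : ω X Z ≠ 0) :
    finrank ℝ (pairOrthogonal ω X Z) < finrank ℝ V := by
  refine Submodule.finrank_lt fun htop => hc ?_
  have hX : X ∈ pairOrthogonal ω X Z := htop ▸ Submodule.mem_top
  rw [← hω.neg_eq, (mem_pairOrthogonal.1 hX).1, neg_zero]

lemma pairOrthogonalProj_mem (hω : ω.IsAlt) (hc : ω X Z ≠ 0) (v : V) :
    v + ((ω X Z)⁻¹ * ω Z v) • X - ((ω X Z)⁻¹ * ω X v) • Z ∈ pairOrthogonal ω X Z := by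
  have hZX : ω Z X = -ω X Z := (hω.neg_eq X Z).symm
  simp only [mem_pairOrthogonal, map_sub, map_add, map_smul, smul_eq_mul, hω.self_eq_zero, hZX]
  constructor <;> field_simp <;> ring

/-- The projection onto `pairOrthogonal ω X Z` along `span {X, Z}`. -/
def pairOrthogonalProj (hω : ω.IsAlt) (hc : ω X Z ≠ 0) : V →ₗ[ℝ] pairOrthogonal ω X Z :=
  (LinearMap.id + (ω X Z)⁻¹ • (ω Z).smulRight X - (ω X Z)⁻¹ • (ω X).smulRight Z).codRestrict _
    fun v => by simpa [smul_smul] using pairOrthogonalProj_mem hω hc v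

variable (hω : ω.IsAlt) (hc : ω X Z ≠ 0)

lemma coe_pairOrthogonalProj (v : V) :
    (pairOrthogonalProj hω hc v : V) =
      v + ((ω X Z)⁻¹ * ω Z v) • X - ((ω X Z)⁻¹ * ω X v) • Z := by
  simp [pairOrthogonalProj, smul_smul]

lemma pairOrthogonalProj_coe (p : pairOrthogonal ω X Z) : pairOrthogonalProj hω hc p = p := by
  obtain ⟨hpZ, hpX⟩ := mem_pairOrthogonal.1 p.2
  ext
  simp [coe_pairOrthogonalProj, hpZ, hpX]

lemma pairOrthogonalProj_fst : pairOrthogonalProj hω hc X = 0 := by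
  ext
  simp [coe_pairOrthogonalProj, hω.self_eq_zero, ← hω.neg_eq X Z, hc]

lemma eq_add_pairOrthogonalProj (v : V) :
    v = (-((ω X Z)⁻¹ * ω Z v)) • X + ((ω X Z)⁻¹ * ω X v) • Z + pairOrthogonalProj hω hc v := by
  rw [coe_pairOrthogonalProj]
  module

lemma apply_pairOrthogonalProj {p : V} (hp : p ∈ pairOrthogonal ω X Z) (v : V) :
    ω p (pairOrthogonalProj hω hc v) = ω p v := by
  have hpZ : ω p Z = 0 := hω.isRefl _ _ hp.1
  have hpX : ω p X = 0 := hω.isRefl _ _ hp.2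
  simp [coe_pairOrthogonalProj, hpZ, hpX]

lemma apply_eq_add_apply_pairOrthogonalProj (u v : V) :
    ω u v = (ω X Z)⁻¹ * (ω X u * ω Z v - ω Z u * ω X v) +
      ω (pairOrthogonalProj hω hc u) (pairOrthogonalProj hω hc v) := by
  conv_lhs => rw [eq_add_pairOrthogonalProj hω hc u]
  rw [apply_pairOrthogonalProj hω hc (pairOrthogonalProj hω hc u).2]
  simp only [map_add, map_smul, LinearMap.add_apply, LinearMap.smul_apply, smul_eq_mul]
  ring

lemma separatingLeft_restrict_pairOrthogonal (hω : ω.IsAlt) (hc : ω X Z ≠ 0)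
    (hnd : ω.SeparatingLeft) : (ω.restrict (pairOrthogonal ω X Z)).SeparatingLeft := by
  intro p hp
  ext1
  refine hnd p fun v => ?_
  rw [← apply_pairOrthogonalProj hω hc p.2]
  exact hp (pairOrthogonalProj hω hc v)

/-- `X ↦ Z`, `Z ↦ -X` on `span {X, Z}`, and `J'` on `pairOrthogonal ω X Z`. -/
def pairExtend (J' : End ℝ (pairOrthogonal ω X Z)) : V →ₗ[ℝ] V :=
  -(ω X Z)⁻¹ • (ω Z).smulRight Z - (ω X Z)⁻¹ • (ω X).smulRight X +
    (pairOrthogonal ω X Z).subtype ∘ₗ J' ∘ₗ pairOrthogonalProj hω hc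

variable (J' : End ℝ (pairOrthogonal ω X Z))

lemma pairExtend_apply (v : V) :
    pairExtend hω hc J' v = (-((ω X Z)⁻¹ * ω Z v)) • Z - ((ω X Z)⁻¹ * ω X v) • X +
      J' (pairOrthogonalProj hω hc v) := by
  simp [pairExtend, smul_smul]

lemma pairExtend_fst : pairExtend hω hc J' X = Z := by
  simp [pairExtend_apply, pairOrthogonalProj_fst, hω.self_eq_zero, ← hω.neg_eq X Z, hc]

lemma pairExtend_coe (p : pairOrthogonal ω X Z) : pairExtend hω hc J' p = J' p := by
  obtain ⟨hpZ, hpX⟩ := mem_pairOrthogonal.1 p.2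
  simp [pairExtend_apply, pairOrthogonalProj_coe, hpZ, hpX]

lemma apply_snd_pairExtend (v : V) : ω Z (pairExtend hω hc J' v) = ω X v := by
  obtain ⟨hZ, -⟩ := mem_pairOrthogonal.1 (J' (pairOrthogonalProj hω hc v)).2
  simp only [pairExtend_apply, map_add, map_sub, map_smul, smul_eq_mul, hZ,
    hω.self_eq_zero, ← hω.neg_eq X Z]
  field_simp
  ring

lemma apply_fst_pairExtend (v : V) : ω X (pairExtend hω hc J' v) = -ω Z v := by
  obtain ⟨-, hX⟩ := mem_pairOrthogonal.1 (J' (pairOrthogonalProj hω hc v)).2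
  simp only [pairExtend_apply, map_add, map_sub, map_smul, smul_eq_mul, hX, hω.self_eq_zero]
  field_simp
  ring

lemma pairOrthogonalProj_pairExtend (v : V) :
    pairOrthogonalProj hω hc (pairExtend hω hc J' v) = J' (pairOrthogonalProj hω hc v) := by
  ext
  rw [coe_pairOrthogonalProj, apply_snd_pairExtend, apply_fst_pairExtend,
    pairExtend_apply]
  module

lemma isCompatibleComplexStructure_pairExtend (hXZ : 0 < ω X Z)
    (hJ' : IsCompatibleComplexStructure (ω.restrict (pairOrthogonal ω X Z)) J') :
    IsCompatibleComplexStructure ω (pairExtend hω hXZ.ne' J') where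
  sq_eq_neg v := by
    rw [pairExtend_apply, apply_snd_pairExtend, apply_fst_pairExtend,
      pairOrthogonalProj_pairExtend, hJ'.sq_eq_neg, Submodule.coe_neg]
    conv_rhs => rw [eq_add_pairOrthogonalProj hω hXZ.ne' v]
    module
  invariant u v := by
    have hJ'uv : ω (J' (pairOrthogonalProj hω hXZ.ne' u)) (J' (pairOrthogonalProj hω hXZ.ne' v)) =
        ω (pairOrthogonalProj hω hXZ.ne' u) (pairOrthogonalProj hω hXZ.ne' v) :=
      hJ'.invariant _ _
    rw [apply_eq_add_apply_pairOrthogonalProj hω hXZ.ne', apply_snd_pairExtend,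
      apply_fst_pairExtend, apply_snd_pairExtend, apply_fst_pairExtend,
      pairOrthogonalProj_pairExtend, pairOrthogonalProj_pairExtend, hJ'uv,
      apply_eq_add_apply_pairOrthogonalProj hω hXZ.ne' u v]
    ring
  pos v hv := by
    set p := pairOrthogonalProj hω hXZ.ne' v with hp_def
    have hsplit : ω v (pairExtend hω hXZ.ne' J' v) =
        (ω X Z)⁻¹ * (ω X v ^ 2 + ω Z v ^ 2) + ω p (J' p) := by
      rw [apply_eq_add_apply_pairOrthogonalProj hω hXZ.ne', apply_snd_pairExtend,
        apply_fst_pairExtend, pairOrthogonalProj_pairExtend]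
      ring
    rw [hsplit]
    rcases eq_or_ne p 0 with hp | hp
    · have hXZv : ω X v ≠ 0 ∨ ω Z v ≠ 0 := by
        contrapose! hv
        rw [eq_add_pairOrthogonalProj hω hXZ.ne' v, ← hp_def, hp, hv.1, hv.2]
        simp
      have hsq : 0 < ω X v ^ 2 + ω Z v ^ 2 := by
        rcases hXZv with h | h <;> positivity
      simp only [hp, map_zero, Submodule.coe_zero, add_zero]
      positivity
    · have hpos : 0 < ω p (J' p) := hJ'.pos p hp
      positivity

lemma map_pairExtend (hJ' : ∀ p, J' (J' p) = -p) :
    (pairOrthogonal ω X Z).map (pairExtend hω hc J') = pairOrthogonal ω X Z := by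
  refine le_antisymm ?_ fun q hq => ⟨(-J' ⟨q, hq⟩ : pairOrthogonal ω X Z), (-J' ⟨q, hq⟩).2, ?_⟩
  · rintro _ ⟨p, hp, rfl⟩
    exact pairExtend_coe hω hc J' ⟨p, hp⟩ ▸ (J' ⟨p, hp⟩).2
  · rw [pairExtend_coe, map_neg, hJ', neg_neg]

end Pair

theorem exists_isCompatibleComplexStructure [FiniteDimensional ℝ V] {ω : BilinForm ℝ V}
    (hω : ω.IsAlt) (hnd : ω.SeparatingLeft) : ∃ J, IsCompatibleComplexStructure ω J := by
  induction hn : finrank ℝ V using Nat.strong_induction_on generalizing V with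
  | _ n ih =>
  rcases subsingleton_or_nontrivial V with hV | hV
  · exact ⟨0, isCompatibleComplexStructure_zero ω⟩
  obtain ⟨X, hX⟩ := exists_ne (0 : V)
  obtain ⟨Z, hXZ⟩ := exists_pos_apply hnd hX
  obtain ⟨J', hJ'⟩ := ih _ (hn ▸ finrank_pairOrthogonal_lt hω hXZ.ne')
    (ω := ω.restrict (pairOrthogonal ω X Z)) (fun p => hω p)
    (separatingLeft_restrict_pairOrthogonal hω hXZ.ne' hnd) rfl
  exact ⟨_, isCompatibleComplexStructure_pairExtend hω J' hXZ hJ'⟩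

end

/-- Given a linear symplectic form `ω` on a finite-dimensional real vector space
and `X, Z` with `ω(X,Z) > 0`, there exists an `ω`-invariant, `ω`-compatible complex structure `J`
with `J X = Z` which preserves `η = ker ω(Z,·) ∩ ker ω(X,·)`. -/
theorem stmt_13 {V : Type*} [AddCommGroup V] [Module ℝ V] [FiniteDimensional ℝ V]
    (ω : V →ₗ[ℝ] V →ₗ[ℝ] ℝ)
    (halt : ∀ v : V, ω v v = 0)
    (hnondeg : ∀ u : V, (∀ v : V, ω u v = 0) → u = 0)
    (X Z : V) (hXZ : 0 < ω X Z)
    (η : Set V) (hη : η = {v : V | ω Z v = 0 ∧ ω X v = 0}) :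
    ∃ J : V →ₗ[ℝ] V,
      (∀ v : V, J (J v) = -v) ∧
      (∀ u v : V, ω (J u) (J v) = ω u v) ∧
      (∀ v : V, v ≠ 0 → 0 < ω v (J v)) ∧
      J X = Z ∧
      J '' η = η := by
  have hη' : η = pairOrthogonal ω X Z := hη
  obtain ⟨J', hJ'⟩ := exists_isCompatibleComplexStructure
    (ω := BilinForm.restrict ω (pairOrthogonal ω X Z))
    (fun p => halt p) (separatingLeft_restrict_pairOrthogonal halt hXZ.ne' hnondeg)
  have hJ := isCompatibleComplexStructure_pairExtend halt J' hXZ hJ'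
  refine ⟨pairExtend halt hXZ.ne' J', hJ.sq_eq_neg, hJ.invariant, hJ.pos,
    pairExtend_fst halt hXZ.ne' J', ?_⟩
  rw [hη', ← Submodule.map_coe, map_pairExtend halt hXZ.ne' J' hJ'.sq_eq_neg]
end
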